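/- arXiv:1211.1834 — 3 statements merged into one kernel-verified Lean document; each statement's English description precedes it below -/
import Mathlib

section
/- (A priori estimates for the regularized corrector.) For every μ > 0: E[|Dφ_μ|²] ≤ β²|ξ|²/α² and μ E[φ_μ²] ≤ β²|ξ|²/α; in particular E[|Dφ_μ|²] is bounded uniformly in μ and E[φ_μ²] ≤ C μ^{−1} with C = β²|ξ|²/α. -/
open MeasureTheory

namespace StochHom

/-- Edges of `ℤ^d`, indexed by their base vertex and their direction:
the pair `(x, i)` represents the edge `(x, x + eᵢ)`. -/
abbrev Edge (d : ℕ) := (Fin d → ℤ) × Fin d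

/-- Environments: conductance functions `ω : 𝔹 → ℝ` (with values in `[α,β]`). -/
abbrev Env (d : ℕ) := Edge d → ℝ

/-- The coordinate unit vector `eᵢ` of `ℤ^d`. -/
def unit {d : ℕ} (i : Fin d) : Fin d → ℤ := Pi.single i 1

/-- The shift `θ_z` of the environment: `(θ_z ω)_{(x,y)} = ω_{(x+z,y+z)}`. -/
def shift {d : ℕ} (z : Fin d → ℤ) (ω : Env d) : Env d :=
  fun e => ω (e.1 + z, e.2)

/-- Forward difference `Dᵢψ(ω) = ψ(θ_{eᵢ}ω) − ψ(ω)`. -/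
def Dgrad {d : ℕ} (ψ : Env d → ℝ) (i : Fin d) (ω : Env d) : ℝ :=
  ψ (shift (unit i) ω) - ψ ω

/-- Backward difference `Dᵢ*ψ(ω) = ψ(ω) − ψ(θ_{−eᵢ}ω)`. -/
def DgradStar {d : ℕ} (ψ : Env d → ℝ) (i : Fin d) (ω : Env d) : ℝ :=
  ψ ω - ψ (shift (-unit i) ω)

/-- The operator `𝓛ψ(ω) = Σ_{z∼0} ω_{(0,z)} (ψ(ω) − ψ(θ_z ω))`, the sum running over the
`2d` nearest neighbors `z` of `0` in `ℤ^d`.  The conductance of the edge `(0, eᵢ)` is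
`ω (0, i)` and that of the edge `(0, −eᵢ)` is `ω (−eᵢ, i)`. -/
def genL {d : ℕ} (ψ : Env d → ℝ) (ω : Env d) : ℝ :=
  ∑ i : Fin d,
    (ω (0, i) * (ψ ω - ψ (shift (unit i) ω))
      + ω (-unit i, i) * (ψ ω - ψ (shift (-unit i) ω)))

/-- The local drift `𝔡(ω) = Σ_{z∼0} ω_{(0,z)} (ξ·z)` in the direction `ξ`. -/
def drift {d : ℕ} (ξ : Fin d → ℝ) (ω : Env d) : ℝ :=
  ∑ i : Fin d, (ω (0, i) * ξ i + ω (-unit i, i) * (-ξ i))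

/-!
Testing the resolvent equation `μ φ + 𝓛 φ = 𝔡` against `φ` and using stationarity to move the
conductances of the edges `(−eᵢ, 0)` onto the edges `(0, eᵢ)` turns it into the energy identity
`μ E[φ²] + E[Σᵢ ωᵢ (Dᵢφ)²] = −E[Σᵢ ξᵢ ωᵢ Dᵢφ]`, where `ωᵢ = ω_{(0,eᵢ)}`. Young's inequality
`−ξᵢ Dᵢφ ≤ (Dᵢφ)²/2 + ξᵢ²/2` bounds the right-hand side by half the energy plus `β|ξ|²/2`, and
`α ≤ ωᵢ ≤ β` converts the resulting bounds into the stated ones.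
-/

lemma neg_mul_integral_mul_le {Ω : Type*} [MeasurableSpace Ω] {P : Measure Ω}
    [IsProbabilityMeasure P] {a f : Ω → ℝ} {β : ℝ} (ha : AEStronglyMeasurable a P)
    (haβ : ∀ᵐ x ∂P, a x ∈ Set.Icc 0 β) (hf : MemLp f 2 P) (c : ℝ) :
    -c * ∫ x, a x * f x ∂P ≤ (∫ x, a x * f x ^ 2 ∂P) / 2 + β * c ^ 2 / 2 := by
  have hnorm : ∀ᵐ x ∂P, ‖a x‖ ≤ β :=
    haβ.mono fun _ hx => (Real.norm_of_nonneg hx.1).trans_le hx.2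
  have haf2 : Integrable (fun x => a x * f x ^ 2) P := hf.integrable_sq.bdd_mul ha hnorm
  rw [← integral_const_mul]
  calc ∫ x, -c * (a x * f x) ∂P ≤ ∫ x, (a x * f x ^ 2 / 2 + β * c ^ 2 / 2) ∂P := by
        refine integral_mono_ae (((hf.integrable one_le_two).bdd_mul ha hnorm).const_mul _)
          ((haf2.div_const 2).add (integrable_const _)) ?_
        filter_upwards [haβ] with x hx
        nlinarith [mul_nonneg hx.1 (sq_nonneg (f x + c)),
          mul_le_mul_of_nonneg_right hx.2 (sq_nonneg c)]
    _ = (∫ x, a x * f x ^ 2 ∂P) / 2 + β * c ^ 2 / 2 := by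
        rw [integral_add (haf2.div_const 2) (integrable_const _), integral_div,
          integral_const, probReal_univ, one_smul]

section Shift

variable {d : ℕ}

@[simp]
lemma shift_neg_shift (z : Fin d → ℤ) (ω : Env d) : shift (-z) (shift z ω) = ω := by
  funext e
  simp [shift]

@[simp]
lemma shift_shift_neg (z : Fin d → ℤ) (ω : Env d) : shift z (shift (-z) ω) = ω := by
  simpa using shift_neg_shift (-z) ω

lemma measurable_shift (z : Fin d → ℤ) : Measurable (shift (d := d) z) :=
  measurable_pi_lambda _ fun _ => measurable_pi_apply _

def shiftMeasurableEquiv (z : Fin d → ℤ) : Env d ≃ᵐ Env d where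
  toFun := shift z
  invFun := shift (-z)
  left_inv := shift_neg_shift z
  right_inv := shift_shift_neg z
  measurable_toFun := measurable_shift z
  measurable_invFun := measurable_shift (-z)

end Shift

section Stationary

variable {d : ℕ} {P : Measure (Env d)} {C : ℝ} {ψ : Env d → ℝ}

lemma integral_conductance_neg_unit_mul (hshift : ∀ z, MeasurePreserving (shift z) P P)
    (i : Fin d) (F : Env d → ℝ) :
    ∫ ω, ω (-unit i, i) * F ω ∂P = ∫ ω, ω (0, i) * F (shift (unit i) ω) ∂P := by
  rw [← (hshift (-unit i)).integral_comp (shiftMeasurableEquiv (-unit i)).measurableEmbedding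
    (fun ω => ω (0, i) * F (shift (unit i) ω))]
  simp [shift]

lemma integrable_conductance_mul (hC : ∀ᵐ ω ∂P, ∀ e, ‖ω e‖ ≤ C) (e : Edge d)
    {f : Env d → ℝ} (hf : Integrable f P) : Integrable (fun ω => ω e * f ω) P :=
  hf.bdd_mul (measurable_pi_apply e).aestronglyMeasurable (hC.mono fun _ h => h e)

lemma integrable_conductance_mul_mul (hC : ∀ᵐ ω ∂P, ∀ e, ‖ω e‖ ≤ C) (e : Edge d)
    {f g : Env d → ℝ} (hf : MemLp f 2 P) (hg : MemLp g 2 P) :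
    Integrable (fun ω => ω e * (f ω * g ω)) P :=
  integrable_conductance_mul hC e (hf.integrable_mul hg)

lemma memLp_comp_shift (hshift : ∀ z, MeasurePreserving (shift z) P P) (hψ : MemLp ψ 2 P)
    (z : Fin d → ℤ) : MemLp (fun ω => ψ (shift z ω)) 2 P :=
  hψ.comp_measurePreserving (hshift z)

lemma integrable_conductance_pair (hC : ∀ᵐ ω ∂P, ∀ e, ‖ω e‖ ≤ C) {u v : Env d → ℝ}
    (hψ : MemLp ψ 2 P) (hu : MemLp u 2 P) (hv : MemLp v 2 P) (i : Fin d) :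
    Integrable (fun ω => ω (0, i) * (ψ ω * u ω) + ω (-unit i, i) * (ψ ω * v ω)) P :=
  (integrable_conductance_mul_mul hC _ hψ hu).add (integrable_conductance_mul_mul hC _ hψ hv)

/-- Discrete integration by parts in direction `i`. -/
lemma integral_conductance_pair (hshift : ∀ z, MeasurePreserving (shift z) P P)
    (hC : ∀ᵐ ω ∂P, ∀ e, ‖ω e‖ ≤ C) {u v : Env d → ℝ}
    (hψ : MemLp ψ 2 P) (hu : MemLp u 2 P) (hv : MemLp v 2 P) (i : Fin d) :
    ∫ ω, (ω (0, i) * (ψ ω * u ω) + ω (-unit i, i) * (ψ ω * v ω)) ∂P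
      = ∫ ω, ω (0, i) * (ψ ω * u ω + ψ (shift (unit i) ω) * v (shift (unit i) ω)) ∂P := by
  rw [integral_add (integrable_conductance_mul_mul hC _ hψ hu)
      (integrable_conductance_mul_mul hC _ hψ hv),
    integral_conductance_neg_unit_mul hshift,
    ← integral_add (integrable_conductance_mul_mul hC _ hψ hu)
      (integrable_conductance_mul_mul hC _ (memLp_comp_shift hshift hψ _)
        (memLp_comp_shift hshift hv _))]
  simp only [mul_add]

lemma mul_genL_eq_sum (ψ : Env d → ℝ) (ω : Env d) :
    ψ ω * genL ψ ω = ∑ i, (ω (0, i) * (ψ ω * (ψ ω - ψ (shift (unit i) ω)))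
        + ω (-unit i, i) * (ψ ω * (ψ ω - ψ (shift (-unit i) ω)))) := by
  rw [genL, Finset.mul_sum]
  exact Finset.sum_congr rfl fun i _ => by ring

lemma mul_drift_eq_sum (ξ : Fin d → ℝ) (ψ : Env d → ℝ) (ω : Env d) :
    ψ ω * drift ξ ω
      = ∑ i, (ω (0, i) * (ψ ω * ξ i) + ω (-unit i, i) * (ψ ω * -ξ i)) := by
  rw [drift, Finset.mul_sum]
  exact Finset.sum_congr rfl fun i _ => by ring

lemma integrable_mul_genL (hshift : ∀ z, MeasurePreserving (shift z) P P)
    (hC : ∀ᵐ ω ∂P, ∀ e, ‖ω e‖ ≤ C) (hψ : MemLp ψ 2 P) :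
    Integrable (fun ω => ψ ω * genL ψ ω) P := by
  simp_rw [mul_genL_eq_sum]
  exact integrable_finsetSum _ fun i _ => integrable_conductance_pair hC hψ
    (hψ.sub (memLp_comp_shift hshift hψ _)) (hψ.sub (memLp_comp_shift hshift hψ _)) i

lemma integral_mul_genL (hshift : ∀ z, MeasurePreserving (shift z) P P)
    (hC : ∀ᵐ ω ∂P, ∀ e, ‖ω e‖ ≤ C) (hψ : MemLp ψ 2 P) :
    ∫ ω, ψ ω * genL ψ ω ∂P = ∑ i, ∫ ω, ω (0, i) * Dgrad ψ i ω ^ 2 ∂P := by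
  have hD (z : Fin d → ℤ) : MemLp (fun ω => ψ ω - ψ (shift z ω)) 2 P :=
    hψ.sub (memLp_comp_shift hshift hψ z)
  simp_rw [mul_genL_eq_sum]
  rw [integral_finsetSum _ fun i _ => integrable_conductance_pair hC hψ (hD _) (hD _) i]
  refine Finset.sum_congr rfl fun i _ => ?_
  rw [integral_conductance_pair hshift hC hψ (hD _) (hD _)]
  refine integral_congr_ae (.of_forall fun ω => ?_)
  simp only [shift_neg_shift, Dgrad]
  ring

lemma integral_mul_drift [IsFiniteMeasure P] (hshift : ∀ z, MeasurePreserving (shift z) P P)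
    (hC : ∀ᵐ ω ∂P, ∀ e, ‖ω e‖ ≤ C) (hψ : MemLp ψ 2 P) (ξ : Fin d → ℝ) :
    ∫ ω, ψ ω * drift ξ ω ∂P = ∑ i, -ξ i * ∫ ω, ω (0, i) * Dgrad ψ i ω ∂P := by
  simp_rw [mul_drift_eq_sum]
  rw [integral_finsetSum _ fun i _ =>
    integrable_conductance_pair hC hψ (memLp_const _) (memLp_const _) i]
  refine Finset.sum_congr rfl fun i _ => ?_
  rw [integral_conductance_pair hshift hC hψ (memLp_const _) (memLp_const _), ← integral_const_mul]
  refine integral_congr_ae (.of_forall fun ω => ?_)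
  simp only [Dgrad]
  ring

lemma ae_norm_le_of_mem_Icc (h : ∀ᵐ ω ∂P, ∀ e, ω e ∈ Set.Icc 0 C) :
    ∀ᵐ ω ∂P, ∀ e, ‖ω e‖ ≤ C :=
  h.mono fun _ hω e => (Real.norm_of_nonneg (hω e).1).trans_le (hω e).2

lemma mul_integral_sum_Dgrad_sq_le (hshift : ∀ z, MeasurePreserving (shift z) P P)
    (hC : ∀ᵐ ω ∂P, ∀ e, ‖ω e‖ ≤ C) {α : ℝ} (hα : ∀ᵐ ω ∂P, ∀ e, α ≤ ω e) (hψ : MemLp ψ 2 P) :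
    α * ∫ ω, ∑ i, Dgrad ψ i ω ^ 2 ∂P ≤ ∑ i, ∫ ω, ω (0, i) * Dgrad ψ i ω ^ 2 ∂P := by
  have hD2 (i : Fin d) : Integrable (fun ω => Dgrad ψ i ω ^ 2) P :=
    ((memLp_comp_shift hshift hψ _).sub hψ).integrable_sq
  rw [integral_finsetSum _ fun i _ => hD2 i, Finset.mul_sum]
  refine Finset.sum_le_sum fun i _ => ?_
  rw [← integral_const_mul]
  refine integral_mono_ae ((hD2 i).const_mul α) (integrable_conductance_mul hC _ (hD2 i)) ?_
  filter_upwards [hα] with ω hω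
  exact mul_le_mul_of_nonneg_right (hω _) (sq_nonneg _)

end Stationary

lemma energy_bound {d : ℕ} {P : Measure (Env d)} [IsProbabilityMeasure P]
    (hshift : ∀ z, MeasurePreserving (shift z) P P) {β : ℝ}
    (hcond : ∀ᵐ ω ∂P, ∀ e, ω e ∈ Set.Icc 0 β) {ξ : Fin d → ℝ} {μ : ℝ} {φ : Env d → ℝ}
    (hφ : MemLp φ 2 P) (heq : ∀ᵐ ω ∂P, μ * φ ω + genL φ ω = drift ξ ω) :
    μ * ∫ ω, φ ω ^ 2 ∂P + (∑ i, ∫ ω, ω (0, i) * Dgrad φ i ω ^ 2 ∂P) / 2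
      ≤ β * (∑ i, ξ i ^ 2) / 2 := by
  have hC := ae_norm_le_of_mem_Icc hcond
  have hidentity : μ * ∫ ω, φ ω ^ 2 ∂P + ∑ i, ∫ ω, ω (0, i) * Dgrad φ i ω ^ 2 ∂P
      = ∑ i, -ξ i * ∫ ω, ω (0, i) * Dgrad φ i ω ∂P :=
    calc _ = ∫ ω, (μ * φ ω ^ 2 + φ ω * genL φ ω) ∂P := by
          rw [integral_add (hφ.integrable_sq.const_mul μ) (integrable_mul_genL hshift hC hφ),
            integral_const_mul, integral_mul_genL hshift hC hφ]
      _ = ∫ ω, φ ω * (μ * φ ω + genL φ ω) ∂P := by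
          congr with ω
          ring
      _ = ∫ ω, φ ω * drift ξ ω ∂P := integral_congr_ae (heq.mono fun ω h => by dsimp only; rw [h])
      _ = _ := integral_mul_drift hshift hC hφ ξ
  have hD (i : Fin d) : MemLp (Dgrad φ i) 2 P := (memLp_comp_shift hshift hφ (unit i)).sub hφ
  have hyoung (i : Fin d) :=
    neg_mul_integral_mul_le (measurable_pi_apply (0, i)).aestronglyMeasurable
      (hcond.mono fun _ h => h (0, i)) (hD i) (ξ i)
  have hsum := Finset.sum_le_sum fun i (_ : i ∈ Finset.univ) => hyoung i
  rw [Finset.sum_add_distrib, ← Finset.sum_div, ← Finset.sum_div, ← Finset.mul_sum] at hsum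
  linarith

theorem statement4_general {d : ℕ} {α β : ℝ} (hα : 0 < α) (hαβ : α ≤ β)
    (P : Measure (Env d)) [IsProbabilityMeasure P]
    (hsupp : ∀ᵐ ω ∂P, ∀ e, ω e ∈ Set.Icc α β)
    (hshift : ∀ z : Fin d → ℤ, MeasurePreserving (shift z) P P)
    (ξ : Fin d → ℝ) (μ : ℝ) (hμ : 0 < μ)
    (φμ : Env d → ℝ) (hφ : MemLp φμ 2 P)
    (heq : ∀ᵐ ω ∂P, μ * φμ ω + genL φμ ω = drift ξ ω) :
    (∫ ω, ∑ i : Fin d, (Dgrad φμ i ω) ^ 2 ∂P ≤ β ^ 2 * (∑ i, ξ i ^ 2) / α ^ 2) ∧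
    μ * ∫ ω, φμ ω ^ 2 ∂P ≤ β ^ 2 * (∑ i, ξ i ^ 2) / α := by
  have hcond : ∀ᵐ ω ∂P, ∀ e, ω e ∈ Set.Icc 0 β :=
    hsupp.mono fun _ h e => ⟨hα.le.trans (h e).1, (h e).2⟩
  have hbound := energy_bound hshift hcond hφ heq
  have hcoercive := mul_integral_sum_Dgrad_sq_le hshift (ae_norm_le_of_mem_Icc hcond)
    (hsupp.mono fun _ h e => (h e).1) hφ
  have henergy_nonneg : 0 ≤ ∑ i, ∫ ω, ω (0, i) * Dgrad φμ i ω ^ 2 ∂P :=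
    Finset.sum_nonneg fun i _ => integral_nonneg_of_ae <|
      hcond.mono fun _ h => mul_nonneg (h (0, i)).1 (sq_nonneg _)
  have hmass_nonneg : 0 ≤ μ * ∫ ω, φμ ω ^ 2 ∂P :=
    mul_nonneg hμ.le (integral_nonneg fun _ => sq_nonneg _)
  have hξ : 0 ≤ β * ∑ i, ξ i ^ 2 := mul_nonneg (hα.le.trans hαβ) (by positivity)
  have hβα : 0 ≤ β * (∑ i, ξ i ^ 2) * (β - α) := mul_nonneg hξ (sub_nonneg.2 hαβ)
  constructor
  · rw [le_div_iff₀ (by positivity)]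
    nlinarith
  · rw [le_div_iff₀ hα]
    nlinarith

/-- a priori estimates for the regularized corrector: for every `μ > 0`,
`E[|Dφ_μ|²] ≤ β²|ξ|²/α²` and `μ E[φ_μ²] ≤ β²|ξ|²/α`. -/
theorem statement4 {d : ℕ} (hd : 1 ≤ d) {α β : ℝ} (hα : 0 < α) (hαβ : α ≤ β)
    (P : Measure (Env d)) [IsProbabilityMeasure P]
    (hsupp : ∀ᵐ ω ∂P, ∀ e, ω e ∈ Set.Icc α β)
    (hshift : ∀ z : Fin d → ℤ, MeasurePreserving (shift z) P P)
    (ξ : Fin d → ℝ) (μ : ℝ) (hμ : 0 < μ)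
    (φμ : Env d → ℝ) (hφ : MemLp φμ 2 P)
    (heq : ∀ᵐ ω ∂P, μ * φμ ω + genL φμ ω = drift ξ ω) :
    (∫ ω, ∑ i : Fin d, (Dgrad φμ i ω) ^ 2 ∂P ≤ β ^ 2 * (∑ i, ξ i ^ 2) / α ^ 2) ∧
    μ * ∫ ω, φμ ω ^ 2 ∂P ≤ β ^ 2 * (∑ i, ξ i ^ 2) / α :=
  statement4_general hα hαβ P hsupp hshift ξ μ hμ φμ hφ heq

end StochHom
end

section
/- (Abstract spectral Cauchy criterion underlying the Kipnis–Varadhan argument.) For every μ > 0 the operator μ·Id + T is invertible, so that φ_μ := (μ·Id + T)^{−1} 𝔡 is well defined. If moreover sup_{0<μ≤1} ⟨φ_μ, T φ_μ⟩ < ∞, then ⟨φ_μ − φ_ν, T(φ_μ − φ_ν)⟩ → 0 as μ, ν → 0: for every ε > 0 there exists δ > 0 such that ⟨φ_μ − φ_ν, T(φ_μ − φ_ν)⟩ ≤ ε whenever 0 < μ ≤ δ and 0 < ν ≤ δ. -/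
/-!
Writing `q x = ⟪x, T x⟫` and `d = φ μ - φ ν` for `μ < ν`, the resolvent equations give
`μ • d + T d = (ν - μ) • φ ν`, hence `(ν - μ) ⟪d, T φ ν⟫ = μ q d + ‖T d‖² ≥ 0`. Expanding
`q (φ μ) = q (d + φ ν)` then yields `q d ≤ q (φ μ) - q (φ ν)`. So `μ ↦ q (φ μ)` is antitone,
and being bounded on `(0, 1]` it converges as `μ → 0`; its Cauchy property controls `q d`.
-/

open Set
open scoped RealInnerProductSpace

section ResolventFamily

variable {H : Type*} [NormedAddCommGroup H] [InnerProductSpace ℝ H] {T : H →L[ℝ] H}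

theorem bijective_smul_add_of_inner_map_nonneg [CompleteSpace H]
    (hnn : ∀ x : H, 0 ≤ ⟪x, T x⟫) {μ : ℝ} (hμ : 0 < μ) :
    Function.Bijective (fun x : H => μ • x + T x) := by
  have hcoercive : ∀ x, ‖x‖ ^ 2 * (⟨μ, hμ.le⟩ : NNReal) ≤ ‖⟪(μ • 1 + T) x, x⟫‖ := by
    intro x
    have hx : ‖x‖ ^ 2 * μ ≤ ⟪μ • x + T x, x⟫ := by
      rw [inner_add_left, real_inner_smul_left, real_inner_self_eq_norm_sq]
      linarith [hnn x, real_inner_comm x (T x)]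
    exact hx.trans (Real.le_norm_self _)
  exact ContinuousLinearMap.isUnit_iff_bijective.mp
    ((μ • 1 + T).isUnit_of_forall_le_norm_inner_map hμ hcoercive)

theorem inner_add_map_add (hT : (T : H →ₗ[ℝ] H).IsSymmetric) (x y : H) :
    ⟪x + y, T (x + y)⟫ = ⟪x, T x⟫ + 2 * ⟪x, T y⟫ + ⟪y, T y⟫ := by
  have hyx : ⟪y, T x⟫ = ⟪x, T y⟫ := (real_inner_comm (T x) y).trans (hT x y)
  simp only [map_add, inner_add_left, inner_add_right, hyx]
  ring

theorem inner_sub_map_sub_comm (x y : H) :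
    ⟪x - y, T (x - y)⟫ = ⟪y - x, T (y - x)⟫ := by
  rw [← neg_sub, map_neg, inner_neg_neg]

theorem mul_inner_sub_map_eq_of_resolvent (hT : (T : H →ₗ[ℝ] H).IsSymmetric) {μ ν : ℝ}
    {x y : H} (hxy : μ • x + T x = ν • y + T y) :
    (ν - μ) * ⟪x - y, T y⟫ = μ * ⟪x - y, T (x - y)⟫ + ‖T (x - y)‖ ^ 2 := by
  have hres : μ • (x - y) + T (x - y) = (ν - μ) • y := by
    rw [smul_sub, map_sub, sub_smul]
    linear_combination (norm := module) hxy
  have hTT : ⟪x - y, T (T (x - y))⟫ = ‖T (x - y)‖ ^ 2 :=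
    (hT _ _).symm.trans (real_inner_self_eq_norm_sq _)
  rw [← real_inner_smul_right, ← map_smul, ← hres, map_add, map_smul, inner_add_right,
    real_inner_smul_right, hTT]

theorem inner_sub_map_sub_le_of_resolvent (hT : (T : H →ₗ[ℝ] H).IsSymmetric)
    (hnn : ∀ x : H, 0 ≤ ⟪x, T x⟫) {μ ν : ℝ} (hμ : 0 < μ) (hμν : μ < ν) {x y : H}
    (hxy : μ • x + T x = ν • y + T y) :
    ⟪x - y, T (x - y)⟫ ≤ ⟪x, T x⟫ - ⟪y, T y⟫ := by
  have hcross : 0 ≤ ⟪x - y, T y⟫ := by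
    have h := mul_inner_sub_map_eq_of_resolvent hT hxy
    have : 0 ≤ (ν - μ) * ⟪x - y, T y⟫ := by
      rw [h]; have := hnn (x - y); positivity
    exact nonneg_of_mul_nonneg_right this (sub_pos.mpr hμν)
  have hexpand := inner_add_map_add hT (x - y) y
  rw [sub_add_cancel] at hexpand
  linarith

end ResolventFamily

theorem AntitoneOn.exists_pos_forall_sub_le {a : ℝ → ℝ} (ha : AntitoneOn a (Ioc 0 1))
    (hbdd : BddAbove (a '' Ioc 0 1)) {ε : ℝ} (hε : 0 < ε) :
    ∃ δ, 0 < δ ∧ ∀ μ ν, 0 < μ → μ ≤ ν → ν ≤ δ → a μ - a ν ≤ ε := by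
  have hne : (a '' Ioc 0 1).Nonempty := ⟨a 1, 1, ⟨one_pos, le_rfl⟩, rfl⟩
  obtain ⟨_, ⟨δ, hδ, rfl⟩, hlt⟩ :=
    exists_lt_of_lt_csSup hne (sub_lt_self (sSup (a '' Ioc 0 1)) hε)
  refine ⟨δ, hδ.1, fun μ ν hμ hμν hνδ => ?_⟩
  have hν : ν ∈ Ioc (0 : ℝ) 1 := ⟨hμ.trans_le hμν, hνδ.trans hδ.2⟩
  have haμ : a μ ≤ sSup (a '' Ioc 0 1) := le_csSup hbdd ⟨μ, ⟨hμ, hμν.trans hν.2⟩, rfl⟩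
  have haν : a δ ≤ a ν := ha hν hδ hνδ
  linarith

/-- abstract spectral Cauchy criterion underlying the Kipnis–Varadhan
argument: for a bounded self-adjoint non-negative operator `T` on a real Hilbert space
and `𝔡 ∈ H`, for every `μ > 0` the operator `μ·Id + T` is invertible (so that
`φ_μ := (μ·Id + T)⁻¹ 𝔡` is well defined), and if `sup_{0<μ≤1} ⟨φ_μ, T φ_μ⟩ < ∞` then
`⟨φ_μ − φ_ν, T(φ_μ − φ_ν)⟩ → 0` as `μ, ν → 0`. -/
theorem statement6 {H : Type*} [NormedAddCommGroup H] [InnerProductSpace ℝ H]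
    [CompleteSpace H] (T : H →L[ℝ] H)
    (hsa : ∀ x y : H, (inner ℝ (T x) y : ℝ) = inner ℝ x (T y))
    (hnn : ∀ x : H, (0 : ℝ) ≤ inner ℝ x (T x)) (𝔡 : H) :
    (∀ μ : ℝ, 0 < μ → Function.Bijective (fun x : H => μ • x + T x)) ∧
    ∀ φ : ℝ → H, (∀ μ : ℝ, 0 < μ → μ • φ μ + T (φ μ) = 𝔡) →
      (∃ M : ℝ, ∀ μ : ℝ, 0 < μ → μ ≤ 1 → (inner ℝ (φ μ) (T (φ μ)) : ℝ) ≤ M) →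
      ∀ ε : ℝ, 0 < ε → ∃ δ : ℝ, 0 < δ ∧
        ∀ μ ν : ℝ, 0 < μ → μ ≤ δ → 0 < ν → ν ≤ δ →
          (inner ℝ (φ μ - φ ν) (T (φ μ - φ ν)) : ℝ) ≤ ε := by
  refine ⟨fun μ hμ => bijective_smul_add_of_inner_map_nonneg hnn hμ, ?_⟩
  rintro φ hφ ⟨M, hM⟩ ε hε
  have hdiff : ∀ μ ν, 0 < μ → μ < ν →
      ⟪φ μ - φ ν, T (φ μ - φ ν)⟫ ≤ ⟪φ μ, T (φ μ)⟫ - ⟪φ ν, T (φ ν)⟫ :=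
    fun μ ν hμ hμν => inner_sub_map_sub_le_of_resolvent hsa hnn hμ hμν
      ((hφ μ hμ).trans (hφ ν (hμ.trans hμν)).symm)
  have hanti : AntitoneOn (fun μ => ⟪φ μ, T (φ μ)⟫) (Ioc 0 1) := by
    intro μ hμ ν _ hμν
    rcases hμν.eq_or_lt with rfl | hlt
    · exact le_rfl
    · linarith [hdiff μ ν hμ.1 hlt, hnn (φ μ - φ ν)]
  obtain ⟨δ, hδ, hosc⟩ := hanti.exists_pos_forall_sub_le
    ⟨M, by rintro _ ⟨μ, hμ, rfl⟩; exact hM μ hμ.1 hμ.2⟩ hε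
  refine ⟨δ, hδ, fun μ ν hμ hμδ hν hνδ => ?_⟩
  wlog hμν : μ ≤ ν generalizing μ ν
  · rw [inner_sub_map_sub_comm]
    exact this ν μ hν hνδ hμ hμδ (le_of_not_ge hμν)
  rcases hμν.eq_or_lt with rfl | hlt
  · simpa using hε.le
  · exact (hdiff μ ν hμ hlt).trans (hosc μ ν hμ hμν hνδ)
end

section
/- (From spectral-exponent bounds to systematic-error rates.) There exists a constant C, depending only on K, q and the total mass e((0,∞)), such that for all 0 < μ ≤ 1/2: if 2 ≤ q < 3 then μ² ∫_{(0,∞)} (μ+λ)^{−2} λ^{−1} de(λ) ≤ C μ^{q−1}; if q = 3 then μ² ∫_{(0,∞)} (μ+λ)^{−2} λ^{−1} de(λ) ≤ C μ² log(1/μ); and if q > 3 then μ² ∫_{(0,∞)} (μ+λ)^{−2} λ^{−1} de(λ) ≤ C μ². (Taking q = d/2 + 1 this converts the optimal bound on the spectral exponents of the local drift into the systematic-error rates μ for d = 2, μ^{3/2} for d = 3, μ² |log μ| for d = 4, and μ² for d > 4.) -/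
/-!
Split `(0,∞)` at `μ` and `1`: the weight `μ² / ((μ + λ)² λ)` is at most `λ⁻¹` on `(0,μ]`, at most
`μ² λ⁻³` on `(μ,1]` and at most `μ²` on `(1,∞)`. Integrals of `λ⁻ᵃ` are estimated over dyadic
shells `(t/2, t]`, each contributing at most `2ᵃ K t^(q-a)`. Summed over `t = r 2⁻ⁿ` this is a
convergent geometric series of size `≍ r^(q-a)` when `a < q`; this handles `(0,μ]` (`a = 1`) and,
for `q > 3`, all of `(0,1]` (`a = 3`). For `q ≤ 3` only the `≈ log₂ (1/μ)` shells between `μ` and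
`1` matter: for `q < 3` their geometric sum is dominated by the last term `≍ μ^(q-3)`, and for
`q = 3` each shell contributes `8K`, which produces the logarithm.
-/

open MeasureTheory Set
open scoped ENNReal

lemma setLIntegral_Ioc_half_inv_pow_le (e : Measure ℝ) {K q t : ℝ} (a : ℕ) (ht : 0 < t)
    (hbound : e (Ioc 0 t) ≤ ENNReal.ofReal (K * t ^ q)) :
    ∫⁻ x in Ioc (t / 2) t, ENNReal.ofReal (x ^ a)⁻¹ ∂e
      ≤ ENNReal.ofReal (2 ^ a * K * t ^ (q - a)) := by
  have hinv : ∀ x ∈ Ioc (t / 2) t, ENNReal.ofReal (x ^ a)⁻¹ ≤ ENNReal.ofReal ((t / 2) ^ a)⁻¹ :=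
    fun x hx ↦ ENNReal.ofReal_le_ofReal <|
      inv_anti₀ (by positivity) (pow_le_pow_left₀ (by positivity) hx.1.le a)
  calc ∫⁻ x in Ioc (t / 2) t, ENNReal.ofReal (x ^ a)⁻¹ ∂e
      ≤ ∫⁻ _ in Ioc (t / 2) t, ENNReal.ofReal ((t / 2) ^ a)⁻¹ ∂e :=
        setLIntegral_mono' measurableSet_Ioc hinv
    _ ≤ ENNReal.ofReal ((t / 2) ^ a)⁻¹ * ENNReal.ofReal (K * t ^ q) := by
        rw [setLIntegral_const]
        gcongr
        exact (measure_mono (Ioc_subset_Ioc_left (by positivity))).trans hbound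
    _ = ENNReal.ofReal (2 ^ a * K * t ^ (q - a)) := by
        rw [← ENNReal.ofReal_mul (by positivity), Real.rpow_sub_natCast ht.ne']
        congr 1
        rw [div_pow]
        field_simp

lemma setLIntegral_Ioc_div_two_pow_le_sum (e : Measure ℝ) (f : ℝ → ℝ≥0∞) {r : ℝ} (hr : 0 ≤ r)
    (N : ℕ) :
    ∫⁻ x in Ioc (r / 2 ^ N) r, f x ∂e
      ≤ ∑ n ∈ Finset.range N, ∫⁻ x in Ioc (r / 2 ^ n / 2) (r / 2 ^ n), f x ∂e := by
  induction N with
  | zero => simp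
  | succ N ih =>
    have hsplit :
        Ioc (r / 2 ^ (N + 1)) r = Ioc (r / 2 ^ N / 2) (r / 2 ^ N) ∪ Ioc (r / 2 ^ N) r := by
      rw [pow_succ, ← div_div, Ioc_union_Ioc_eq_Ioc (by linarith [show 0 ≤ r / 2 ^ N by positivity])
        (div_le_self hr (one_le_pow₀ one_le_two))]
    rw [hsplit, Finset.sum_range_succ, add_comm]
    exact (lintegral_union_le _ _ _).trans (by gcongr)

lemma div_two_pow_rpow {r : ℝ} (hr : 0 ≤ r) (s : ℝ) (n : ℕ) :
    (r / 2 ^ n) ^ s = r ^ s * ((2 : ℝ) ^ (-s)) ^ n := by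
  rw [Real.div_rpow hr (by positivity), ← Real.rpow_pow_comm zero_le_two, Real.rpow_neg zero_le_two,
    inv_pow, div_eq_mul_inv]

section DyadicBounds

variable {e : Measure ℝ} {K q : ℝ}

lemma setLIntegral_Ioc_div_two_pow_inv_pow_le (hK : 0 ≤ K)
    (hbound : ∀ ν : ℝ, 0 < ν → ν ≤ 1 → e (Ioc 0 ν) ≤ ENNReal.ofReal (K * ν ^ q))
    {r : ℝ} (hr0 : 0 < r) (hr1 : r ≤ 1) (a N : ℕ) :
    ∫⁻ x in Ioc (r / 2 ^ N) r, ENNReal.ofReal (x ^ a)⁻¹ ∂e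
      ≤ ENNReal.ofReal
          (2 ^ a * K * r ^ (q - a) * ∑ n ∈ Finset.range N, ((2 : ℝ) ^ (a - q)) ^ n) := by
  refine (setLIntegral_Ioc_div_two_pow_le_sum e _ hr0.le N).trans ?_
  rw [Finset.mul_sum, ENNReal.ofReal_sum_of_nonneg fun n _ ↦ by positivity]
  refine Finset.sum_le_sum fun n _ ↦ ?_
  have ht1 : r / 2 ^ n ≤ 1 := (div_le_self hr0.le (one_le_pow₀ one_le_two)).trans hr1
  refine (setLIntegral_Ioc_half_inv_pow_le e a (by positivity)
    (hbound _ (by positivity) ht1)).trans_eq ?_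
  rw [div_two_pow_rpow hr0.le, neg_sub, mul_assoc (2 ^ a * K)]

lemma Ioc_zero_eq_iUnion_Ioc_div_two_pow {r : ℝ} (hr : 0 ≤ r) :
    Ioc 0 r = ⋃ N : ℕ, Ioc (r / 2 ^ N) r := by
  ext x
  simp only [mem_Ioc, mem_iUnion]
  constructor
  · rintro ⟨hx0, hxr⟩
    obtain ⟨N, hN⟩ := exists_pow_lt_of_lt_one (div_pos hx0 (hx0.trans_le hxr)) one_half_lt_one
    refine ⟨N, ?_, hxr⟩
    have hr0 : 0 < r := hx0.trans_le hxr
    calc r / 2 ^ N = r * (1 / 2) ^ N := by rw [one_div_pow, mul_one_div]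
      _ < r * (x / r) := by gcongr
      _ = x := mul_div_cancel₀ x hr0.ne'
  · rintro ⟨N, hN, hxr⟩
    exact ⟨(by positivity : 0 ≤ r / 2 ^ N).trans_lt hN, hxr⟩

lemma exists_setLIntegral_Ioc_zero_inv_pow_le (hK : 0 ≤ K)
    (hbound : ∀ ν : ℝ, 0 < ν → ν ≤ 1 → e (Ioc 0 ν) ≤ ENNReal.ofReal (K * ν ^ q))
    {a : ℕ} (ha : a < q) :
    ∃ c, 0 ≤ c ∧ ∀ r, 0 < r → r ≤ 1 →
      ∫⁻ x in Ioc 0 r, ENNReal.ofReal (x ^ a)⁻¹ ∂e ≤ ENNReal.ofReal (c * r ^ (q - a)) := by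
  have hρ0 : (0 : ℝ) ≤ 2 ^ ((a : ℝ) - q) := by positivity
  have hρ1 : (2 : ℝ) ^ ((a : ℝ) - q) < 1 :=
    Real.rpow_lt_one_of_one_lt_of_neg one_lt_two (by linarith)
  refine ⟨2 ^ a * K / (1 - 2 ^ ((a : ℝ) - q)), div_nonneg (by positivity) (by linarith),
    fun r hr0 hr1 ↦ ?_⟩
  have hmono : Monotone fun N : ℕ ↦ Ioc (r / 2 ^ N) r := fun N M hNM ↦
    Ioc_subset_Ioc_left (div_le_div_of_nonneg_left hr0.le (by positivity)
      (pow_le_pow_right₀ one_le_two hNM))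
  rw [Ioc_zero_eq_iUnion_Ioc_div_two_pow hr0.le,
    setLIntegral_iUnion_of_directed _ hmono.directed_le]
  refine iSup_le fun N ↦ (setLIntegral_Ioc_div_two_pow_inv_pow_le hK hbound hr0 hr1 a N).trans ?_
  refine ENNReal.ofReal_le_ofReal ?_
  rw [div_mul_eq_mul_div, div_eq_mul_inv]
  refine mul_le_mul_of_nonneg_left ?_ (by positivity)
  simpa using geom_sum_Ico_le_of_lt_one hρ0 hρ1 (m := 0) (n := N)

lemma setLIntegral_Ioc_inv_pow_le_geom_sum (hK : 0 ≤ K)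
    (hbound : ∀ ν : ℝ, 0 < ν → ν ≤ 1 → e (Ioc 0 ν) ≤ ENNReal.ofReal (K * ν ^ q))
    {μ : ℝ} {N : ℕ} (hN : 1 ≤ 2 ^ N * μ) (a : ℕ) :
    ∫⁻ x in Ioc μ 1, ENNReal.ofReal (x ^ a)⁻¹ ∂e
      ≤ ENNReal.ofReal (2 ^ a * K * ∑ n ∈ Finset.range N, ((2 : ℝ) ^ (a - q)) ^ n) := by
  have hsub : Ioc μ 1 ⊆ Ioc (1 / 2 ^ N) 1 :=
    Ioc_subset_Ioc_left ((div_le_iff₀' (by positivity)).2 hN)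
  simpa using (lintegral_mono_set hsub).trans
    (setLIntegral_Ioc_div_two_pow_inv_pow_le hK hbound one_pos le_rfl a N)

lemma exists_setLIntegral_Ioc_zero_inv_le (hK : 0 ≤ K)
    (hbound : ∀ ν : ℝ, 0 < ν → ν ≤ 1 → e (Ioc 0 ν) ≤ ENNReal.ofReal (K * ν ^ q)) (hq : 1 < q) :
    ∃ c, 0 ≤ c ∧ ∀ r, 0 < r → r ≤ 1 →
      ∫⁻ x in Ioc 0 r, ENNReal.ofReal x⁻¹ ∂e ≤ ENNReal.ofReal (c * r ^ (q - 1)) := by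
  simpa using exists_setLIntegral_Ioc_zero_inv_pow_le hK hbound (a := 1) (by simpa using hq)

end DyadicBounds

lemma exists_one_le_two_pow_mul_le_two {μ : ℝ} (hμ0 : 0 < μ) (hμ1 : μ ≤ 1) :
    ∃ N : ℕ, 1 ≤ 2 ^ N * μ ∧ 2 ^ N * μ ≤ 2 := by
  obtain ⟨n, hn, hn'⟩ := exists_nat_pow_near (one_le_inv_iff₀.2 ⟨hμ0, hμ1⟩) one_lt_two
  refine ⟨n + 1, ((inv_lt_iff_one_lt_mul₀ hμ0).1 hn').le, ?_⟩
  have h : 2 ^ n * μ ≤ 1 := by simpa [hμ0.ne'] using mul_le_mul_of_nonneg_right hn hμ0.le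
  rw [pow_succ, mul_right_comm]
  linarith

noncomputable def systematicError (e : Measure ℝ) (μ : ℝ) : ℝ≥0∞ :=
  ENNReal.ofReal (μ ^ 2) * ∫⁻ l in Ioi 0, ENNReal.ofReal (((μ + l) ^ 2 * l)⁻¹) ∂e

lemma systematicError_le (e : Measure ℝ) [IsFiniteMeasure e] {μ A B : ℝ} (hμ0 : 0 < μ)
    (hμ1 : μ ≤ 1) (hA0 : 0 ≤ A) (hB0 : 0 ≤ B)
    (hA : ∫⁻ l in Ioc 0 μ, ENNReal.ofReal l⁻¹ ∂e ≤ ENNReal.ofReal A)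
    (hB : ∫⁻ l in Ioc μ 1, ENNReal.ofReal (l ^ 3)⁻¹ ∂e ≤ ENNReal.ofReal B) :
    systematicError e μ ≤ ENNReal.ofReal (A + μ ^ 2 * (B + e.real univ)) := by
  set m := ENNReal.ofReal (μ ^ 2)
  have hsmall : ∀ l, 0 < l → μ ^ 2 * ((μ + l) ^ 2 * l)⁻¹ ≤ l⁻¹ := fun l hl ↦ by
    rw [← div_eq_mul_inv, div_le_iff₀ (by positivity), inv_mul_eq_div, le_div_iff₀ hl]
    nlinarith [(by positivity : 0 ≤ (2 * μ * l + l ^ 2) * l)]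
  have hlarge : ∀ l, 0 < l → ((μ + l) ^ 2 * l)⁻¹ ≤ (l ^ 3)⁻¹ := fun l hl ↦
    inv_anti₀ (by positivity) (by nlinarith [(by positivity : 0 ≤ (μ ^ 2 + 2 * μ * l) * l)])
  have hsplit : Ioi (0 : ℝ) = Ioc 0 μ ∪ (Ioc μ 1 ∪ Ioi 1) := by
    rw [Ioc_union_Ioi_eq_Ioi hμ1, Ioc_union_Ioi_eq_Ioi hμ0.le]
  have h₁ : ∫⁻ l in Ioc 0 μ, m * ENNReal.ofReal ((μ + l) ^ 2 * l)⁻¹ ∂e ≤ ENNReal.ofReal A := by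
    refine le_trans (setLIntegral_mono' measurableSet_Ioc fun l hl ↦ ?_) hA
    rw [← ENNReal.ofReal_mul (by positivity)]
    exact ENNReal.ofReal_le_ofReal (hsmall l hl.1)
  have h₂ : ∫⁻ l in Ioc μ 1, m * ENNReal.ofReal ((μ + l) ^ 2 * l)⁻¹ ∂e ≤ m * ENNReal.ofReal B := by
    rw [lintegral_const_mul' _ _ ENNReal.ofReal_ne_top]
    refine mul_le_mul_right (le_trans (setLIntegral_mono' measurableSet_Ioc fun l hl ↦ ?_) hB) m
    exact ENNReal.ofReal_le_ofReal (hlarge l (hμ0.trans hl.1))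
  have h₃ : ∫⁻ l in Ioi 1, m * ENNReal.ofReal ((μ + l) ^ 2 * l)⁻¹ ∂e ≤ m * e univ := by
    rw [lintegral_const_mul' _ _ ENNReal.ofReal_ne_top]
    refine mul_le_mul_right ?_ m
    calc ∫⁻ l in Ioi 1, ENNReal.ofReal ((μ + l) ^ 2 * l)⁻¹ ∂e
        ≤ ∫⁻ _ in Ioi 1, 1 ∂e := setLIntegral_mono' measurableSet_Ioi fun l (hl : 1 < l) ↦
          ENNReal.ofReal_le_one.2 ((hlarge l (one_pos.trans hl)).trans
            (inv_le_one_of_one_le₀ (one_le_pow₀ hl.le)))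
      _ ≤ e univ := by simpa using measure_mono (subset_univ _)
  calc systematicError e μ
      = ∫⁻ l in Ioi 0, m * ENNReal.ofReal ((μ + l) ^ 2 * l)⁻¹ ∂e :=
        (lintegral_const_mul' _ _ ENNReal.ofReal_ne_top).symm
    _ ≤ ENNReal.ofReal A + (m * ENNReal.ofReal B + m * e univ) := by
        rw [hsplit]
        refine (lintegral_union_le _ _ _).trans (add_le_add h₁ ?_)
        exact (lintegral_union_le _ _ _).trans (add_le_add h₂ h₃)
    _ = ENNReal.ofReal (A + μ ^ 2 * (B + e.real univ)) := by
        rw [← mul_add, ← ofReal_measureReal, ← ENNReal.ofReal_add hB0 measureReal_nonneg,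
          ← ENNReal.ofReal_mul (sq_nonneg μ), ← ENNReal.ofReal_add hA0 (by positivity)]

section Rates

variable {e : Measure ℝ} [IsFiniteMeasure e] {K q : ℝ}

lemma systematicError_le_of_lt_three (hK : 0 ≤ K)
    (hbound : ∀ ν : ℝ, 0 < ν → ν ≤ 1 → e (Ioc 0 ν) ≤ ENNReal.ofReal (K * ν ^ q))
    (hq1 : 1 < q) (hq3 : q < 3) :
    ∃ C, 0 ≤ C ∧ ∀ μ, 0 < μ → μ ≤ 1 / 2 →
      systematicError e μ ≤ ENNReal.ofReal (C * μ ^ (q - 1)) := by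
  obtain ⟨c, hc0, hc⟩ := exists_setLIntegral_Ioc_zero_inv_le hK hbound hq1
  set ρ : ℝ := 2 ^ (3 - q)
  have hρ : 1 < ρ := Real.one_lt_rpow one_lt_two (by linarith)
  set d : ℝ := 8 * K / (ρ - 1)
  have hd : 0 ≤ d := div_nonneg (by positivity) (by linarith)
  refine ⟨c + d * ρ + e.real univ, by positivity, fun μ hμ0 hμ ↦ ?_⟩
  have hμ1 : μ ≤ 1 := by linarith
  obtain ⟨N, hN1, hN2⟩ := exists_one_le_two_pow_mul_le_two hμ0 hμ1
  have hB : ∫⁻ x in Ioc μ 1, ENNReal.ofReal (x ^ 3)⁻¹ ∂e ≤ ENNReal.ofReal (d * ρ ^ N) := by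
    refine (setLIntegral_Ioc_inv_pow_le_geom_sum hK hbound hN1 3).trans
      (ENNReal.ofReal_le_ofReal ?_)
    rw [Nat.cast_ofNat, geom_sum_eq hρ.ne', div_mul_eq_mul_div, ← mul_div_assoc]
    norm_num only
    exact div_le_div_of_nonneg_right
      (mul_le_mul_of_nonneg_left (sub_le_self _ zero_le_one) (by positivity)) (by linarith)
  have hscale : μ ^ 2 * ρ ^ N ≤ ρ * μ ^ (q - 1) := by
    have hsplit : μ ^ 2 * ρ ^ N = μ ^ (q - 1) * (2 ^ N * μ) ^ (3 - q) := by
      rw [mul_comm (μ ^ 2), Real.mul_rpow (by positivity) hμ0.le,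
        ← Real.rpow_pow_comm zero_le_two, mul_left_comm, ← Real.rpow_add hμ0]
      norm_num [ρ]
    rw [hsplit, mul_comm ρ]
    gcongr
    exact Real.rpow_le_rpow (by positivity) hN2 (by linarith)
  have hμq : μ ^ 2 ≤ μ ^ (q - 1) := by
    simpa using Real.rpow_le_rpow_of_exponent_ge hμ0 hμ1 (show q - 1 ≤ 2 by linarith)
  refine (systematicError_le e hμ0 hμ1 (by positivity) (by positivity) (hc μ hμ0 hμ1) hB).trans
    (ENNReal.ofReal_le_ofReal ?_)
  nlinarith [mul_le_mul_of_nonneg_left hscale hd,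
    mul_le_mul_of_nonneg_left hμq (measureReal_nonneg : 0 ≤ e.real univ)]

lemma systematicError_le_of_eq_three (hK : 0 ≤ K)
    (hbound : ∀ ν : ℝ, 0 < ν → ν ≤ 1 → e (Ioc 0 ν) ≤ ENNReal.ofReal (K * ν ^ (3 : ℝ))) :
    ∃ C, 0 ≤ C ∧ ∀ μ, 0 < μ → μ ≤ 1 / 2 →
      systematicError e μ ≤ ENNReal.ofReal (C * μ ^ 2 * Real.log (1 / μ)) := by
  obtain ⟨c, hc0, hc⟩ := exists_setLIntegral_Ioc_zero_inv_le hK hbound (by norm_num)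
  have hlog2 : 0 < Real.log 2 := Real.log_pos one_lt_two
  refine ⟨(c + 16 * K + e.real univ) / Real.log 2, by positivity, fun μ hμ0 hμ ↦ ?_⟩
  have hμ1 : μ ≤ 1 := by linarith
  obtain ⟨N, hN1, hN2⟩ := exists_one_le_two_pow_mul_le_two hμ0 hμ1
  have hB : ∫⁻ x in Ioc μ 1, ENNReal.ofReal (x ^ 3)⁻¹ ∂e ≤ ENNReal.ofReal (8 * K * N) := by
    refine (setLIntegral_Ioc_inv_pow_le_geom_sum hK hbound hN1 3).trans_eq ?_
    norm_num
  have hL : Real.log 2 ≤ Real.log (1 / μ) :=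
    Real.log_le_log two_pos (by rw [le_div_iff₀ hμ0]; linarith)
  have hNL : N * Real.log 2 ≤ 2 * Real.log (1 / μ) := by
    have h2N : (2 : ℝ) ^ N ≤ (1 / μ) ^ 2 := by
      rw [div_pow, one_pow, le_div_iff₀ (by positivity)]
      nlinarith
    calc N * Real.log 2 = Real.log (2 ^ N) := (Real.log_pow 2 N).symm
      _ ≤ Real.log ((1 / μ) ^ 2) := Real.log_le_log (by positivity) h2N
      _ = 2 * Real.log (1 / μ) := by rw [Real.log_pow]; norm_num
  refine (systematicError_le e hμ0 hμ1 (by positivity) (by positivity) (hc μ hμ0 hμ1) hB).trans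
    (ENNReal.ofReal_le_ofReal ?_)
  rw [show (3 : ℝ) - 1 = 2 by norm_num, Real.rpow_two]
  rw [div_mul_eq_mul_div, div_mul_eq_mul_div, le_div_iff₀ hlog2]
  nlinarith [mul_le_mul_of_nonneg_left hL (by positivity : 0 ≤ (c + e.real univ) * μ ^ 2),
    mul_le_mul_of_nonneg_left hNL (by positivity : 0 ≤ 8 * K * μ ^ 2)]

lemma systematicError_le_of_three_lt (hK : 0 ≤ K)
    (hbound : ∀ ν : ℝ, 0 < ν → ν ≤ 1 → e (Ioc 0 ν) ≤ ENNReal.ofReal (K * ν ^ q)) (hq : 3 < q) :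
    ∃ C, 0 ≤ C ∧ ∀ μ, 0 < μ → μ ≤ 1 / 2 → systematicError e μ ≤ ENNReal.ofReal (C * μ ^ 2) := by
  obtain ⟨c, hc0, hc⟩ := exists_setLIntegral_Ioc_zero_inv_le hK hbound (by linarith)
  obtain ⟨c', hc'0, hc'⟩ :=
    exists_setLIntegral_Ioc_zero_inv_pow_le hK hbound (a := 3) (by norm_num [hq])
  refine ⟨c + c' + e.real univ, by positivity, fun μ hμ0 hμ ↦ ?_⟩
  have hμ1 : μ ≤ 1 := by linarith
  have hB : ∫⁻ x in Ioc μ 1, ENNReal.ofReal (x ^ 3)⁻¹ ∂e ≤ ENNReal.ofReal c' := by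
    simpa using (lintegral_mono_set (Ioc_subset_Ioc_left hμ0.le)).trans (hc' 1 one_pos le_rfl)
  have hμq : μ ^ (q - 1) ≤ μ ^ 2 := by
    simpa using Real.rpow_le_rpow_of_exponent_ge hμ0 hμ1 (show (2 : ℝ) ≤ q - 1 by linarith)
  refine (systematicError_le e hμ0 hμ1 (by positivity) hc'0 (hc μ hμ0 hμ1) hB).trans
    (ENNReal.ofReal_le_ofReal ?_)
  nlinarith [mul_le_mul_of_nonneg_left hμq hc0]

end Rates

theorem statement13_general (e : Measure ℝ) [IsFiniteMeasure e]
    (K q : ℝ) (hK : 0 ≤ K) (hq : 2 ≤ q)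
    (hbound : ∀ ν : ℝ, 0 < ν → ν ≤ 1 → e (Set.Ioc 0 ν) ≤ ENNReal.ofReal (K * ν ^ q)) :
    ∃ C : ℝ, 0 ≤ C ∧ ∀ μ : ℝ, 0 < μ → μ ≤ 1 / 2 →
      (q < 3 →
        ENNReal.ofReal (μ ^ 2) *
            ∫⁻ l in Set.Ioi (0 : ℝ), ENNReal.ofReal (((μ + l) ^ 2 * l)⁻¹) ∂e
          ≤ ENNReal.ofReal (C * μ ^ (q - 1))) ∧
      (q = 3 →
        ENNReal.ofReal (μ ^ 2) *
            ∫⁻ l in Set.Ioi (0 : ℝ), ENNReal.ofReal (((μ + l) ^ 2 * l)⁻¹) ∂e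
          ≤ ENNReal.ofReal (C * μ ^ 2 * Real.log (1 / μ))) ∧
      (3 < q →
        ENNReal.ofReal (μ ^ 2) *
            ∫⁻ l in Set.Ioi (0 : ℝ), ENNReal.ofReal (((μ + l) ^ 2 * l)⁻¹) ∂e
          ≤ ENNReal.ofReal (C * μ ^ 2)) := by
  rcases lt_trichotomy q 3 with hq3 | rfl | hq3
  · obtain ⟨C, hC0, hC⟩ := systematicError_le_of_lt_three hK hbound (by linarith) hq3
    exact ⟨C, hC0, fun μ hμ0 hμ ↦
      ⟨fun _ ↦ hC μ hμ0 hμ, fun h ↦ absurd h hq3.ne, fun h ↦ absurd h hq3.not_gt⟩⟩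
  · obtain ⟨C, hC0, hC⟩ := systematicError_le_of_eq_three hK hbound
    exact ⟨C, hC0, fun μ hμ0 hμ ↦
      ⟨fun h ↦ absurd h (lt_irrefl 3), fun _ ↦ hC μ hμ0 hμ, fun h ↦ absurd h (lt_irrefl 3)⟩⟩
  · obtain ⟨C, hC0, hC⟩ := systematicError_le_of_three_lt hK hbound hq3
    exact ⟨C, hC0, fun μ hμ0 hμ ↦
      ⟨fun h ↦ absurd h hq3.not_gt, fun h ↦ absurd h hq3.ne', fun _ ↦ hC μ hμ0 hμ⟩⟩

/-- from spectral-exponent bounds to systematic-error rates: if `e` is a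
finite Borel measure on `(0,∞)` with `e((0,ν]) ≤ K ν^q` for all `ν ∈ (0,1]` (where
`K ≥ 0`, `q ≥ 2`), then there is a constant `C` (depending only on `K`, `q` and the total
mass of `e`) such that for all `0 < μ ≤ 1/2`,
`μ² ∫ (μ+λ)⁻² λ⁻¹ de(λ)` is at most `C μ^{q−1}` if `2 ≤ q < 3`, at most `C μ² log(1/μ)`
if `q = 3`, and at most `C μ²` if `q > 3`. -/
theorem statement13 (e : Measure ℝ) [IsFiniteMeasure e] (he : e (Set.Iic 0) = 0)
    (K q : ℝ) (hK : 0 ≤ K) (hq : 2 ≤ q)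
    (hbound : ∀ ν : ℝ, 0 < ν → ν ≤ 1 → e (Set.Ioc 0 ν) ≤ ENNReal.ofReal (K * ν ^ q)) :
    ∃ C : ℝ, 0 ≤ C ∧ ∀ μ : ℝ, 0 < μ → μ ≤ 1 / 2 →
      (q < 3 →
        ENNReal.ofReal (μ ^ 2) *
            ∫⁻ l in Set.Ioi (0 : ℝ), ENNReal.ofReal (((μ + l) ^ 2 * l)⁻¹) ∂e
          ≤ ENNReal.ofReal (C * μ ^ (q - 1))) ∧
      (q = 3 →
        ENNReal.ofReal (μ ^ 2) *
            ∫⁻ l in Set.Ioi (0 : ℝ), ENNReal.ofReal (((μ + l) ^ 2 * l)⁻¹) ∂e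
          ≤ ENNReal.ofReal (C * μ ^ 2 * Real.log (1 / μ))) ∧
      (3 < q →
        ENNReal.ofReal (μ ^ 2) *
            ∫⁻ l in Set.Ioi (0 : ℝ), ENNReal.ofReal (((μ + l) ^ 2 * l)⁻¹) ∂e
          ≤ ENNReal.ofReal (C * μ ^ 2)) :=
  statement13_general e K q hK hq hbound
end
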